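/- arXiv:0811.1824 — 3 statements merged into one kernel-verified Lean document; each statement's English description precedes it below -/
import Mathlib

section
/- In an orthomodular lattice L, defining the Sasaki product p ∧̇ q := p ∧ (p⊥ ∨ q), the lattice L is a Boolean algebra if and only if p ∧̇ q = q ∧̇ p for all p, q ∈ L. -/
/-- An orthomodular lattice structure on a bounded lattice: an order-reversing
involutive orthocomplementation satisfying the orthomodular law. -/
class Orthomodular (L : Type*) [Lattice L] [BoundedOrder L] where
  compl : L → L
  compl_antitone : ∀ p q : L, p ≤ q → compl q ≤ compl p
  compl_compl : ∀ p : L, compl (compl p) = p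
  sup_compl : ∀ p : L, p ⊔ compl p = ⊤
  inf_compl : ∀ p : L, p ⊓ compl p = ⊥
  orthomodular : ∀ p q : L, p ≤ q → p ⊔ (compl p ⊓ q) = q

/-!
If the Sasaki product is commutative then `p ⊓ (pᗮ ⊔ q) = q ⊓ (qᗮ ⊔ p) ≤ q`. To get
distributivity, note that `d := p ⊓ q ⊔ p ⊓ r ≤ e := p ⊓ (q ⊔ r)` always holds, so by the
orthomodular law it suffices that `dᗮ ⊓ e = ⊥`. An element `x` below `dᗮ ⊓ e` lies below `p` and
below `(p ⊓ q)ᗮ = pᗮ ⊔ qᗮ`, hence below the Sasaki product of `p` and `qᗮ`, hence below `qᗮ`;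
likewise below `rᗮ`. So `x` lies below both `q ⊔ r` and its complement `qᗮ ⊓ rᗮ`.
-/

namespace Orthomodular

variable {L : Type*} [Lattice L] [BoundedOrder L] [Orthomodular L]

local postfix:max "ᗮ" => Orthomodular.compl

def sasaki (p q : L) : L := p ⊓ (pᗮ ⊔ q)

theorem le_compl_comm {p q : L} : p ≤ qᗮ ↔ q ≤ pᗮ :=
  ⟨fun h => compl_compl q ▸ compl_antitone _ _ h, fun h => compl_compl p ▸ compl_antitone _ _ h⟩

theorem compl_sup (p q : L) : (p ⊔ q)ᗮ = pᗮ ⊓ qᗮ :=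
  le_antisymm (le_inf (compl_antitone _ _ le_sup_left) (compl_antitone _ _ le_sup_right))
    (le_compl_comm.mp (sup_le (le_compl_comm.mpr inf_le_left) (le_compl_comm.mpr inf_le_right)))

theorem compl_inf (p q : L) : (p ⊓ q)ᗮ = pᗮ ⊔ qᗮ := by
  rw [← compl_compl (pᗮ ⊔ qᗮ), compl_sup, compl_compl, compl_compl]

theorem eq_bot_of_le_of_le_compl {x p : L} (hp : x ≤ p) (hpc : x ≤ pᗮ) : x = ⊥ :=
  le_bot_iff.mp (inf_compl p ▸ le_inf hp hpc)

theorem eq_of_le_of_compl_inf_eq_bot {p q : L} (hpq : p ≤ q) (h : pᗮ ⊓ q = ⊥) : p = q := by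
  simpa only [h, sup_bot_eq] using orthomodular p q hpq

theorem sasaki_eq_inf (hd : ∀ p q r : L, p ⊓ (q ⊔ r) = p ⊓ q ⊔ p ⊓ r) (p q : L) :
    sasaki p q = p ⊓ q := by
  rw [sasaki, hd, inf_compl, bot_sup_eq]

section SasakiLe

variable (h : ∀ p q : L, sasaki p q ≤ q)
include h

theorem le_compl_of_le_compl_inf {x p q : L} (hp : x ≤ p) (hpq : x ≤ (p ⊓ q)ᗮ) :
    x ≤ qᗮ := by
  rw [compl_inf] at hpq
  exact (le_inf hp hpq).trans (h p qᗮ)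

theorem inf_sup_eq_of_sasaki_le (p q r : L) : p ⊓ (q ⊔ r) = p ⊓ q ⊔ p ⊓ r := by
  refine (eq_of_le_of_compl_inf_eq_bot
    (sup_le (inf_le_inf_left _ le_sup_left) (inf_le_inf_left _ le_sup_right)) ?_).symm
  set x := (p ⊓ q ⊔ p ⊓ r)ᗮ ⊓ (p ⊓ (q ⊔ r))
  have hxd : x ≤ (p ⊓ q)ᗮ ⊓ (p ⊓ r)ᗮ := compl_sup (p ⊓ q) (p ⊓ r) ▸ inf_le_left
  have hxp : x ≤ p := inf_le_right.trans inf_le_left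
  have hxq : x ≤ qᗮ := le_compl_of_le_compl_inf h hxp (hxd.trans inf_le_left)
  have hxr : x ≤ rᗮ := le_compl_of_le_compl_inf h hxp (hxd.trans inf_le_right)
  exact eq_bot_of_le_of_le_compl (inf_le_right.trans inf_le_right)
    (compl_sup q r ▸ le_inf hxq hxr)

end SasakiLe

end Orthomodular

/-- In an orthomodular lattice, with the Sasaki product p ∧̇ q := p ⊓ (pᗮ ⊔ q),
the lattice is a Boolean algebra (i.e. distributive) iff the Sasaki product is
commutative. -/
theorem sasaki_comm_iff_boolean {L : Type*} [Lattice L] [BoundedOrder L]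
    [O : Orthomodular L] :
    (∀ p q r : L, p ⊓ (q ⊔ r) = (p ⊓ q) ⊔ (p ⊓ r)) ↔
      (∀ p q : L, p ⊓ (O.compl p ⊔ q) = q ⊓ (O.compl q ⊔ p)) := by
  refine ⟨fun hd p q => ?_, fun hs => Orthomodular.inf_sup_eq_of_sasaki_le fun p q => ?_⟩
  · change Orthomodular.sasaki p q = Orthomodular.sasaki q p
    rw [Orthomodular.sasaki_eq_inf hd, Orthomodular.sasaki_eq_inf hd, inf_comm]
  · exact (hs p q).trans_le inf_le_left
end

section
/- A state α on a unital C*-algebra A is multiplicative (α(ab) = α(a)α(b) for all a, b) if and only if α(a²) = α(a)² for every self-adjoint a ∈ A. -/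
open ComplexOrder

/-- A state on a unital C*-algebra: a positive linear functional sending 1 to 1. -/
def IsState' {A : Type*} [CStarAlgebra A] (φ : A →ₗ[ℂ] ℂ) : Prop :=
  φ 1 = 1 ∧ ∀ a : A, 0 ≤ φ (star a * a)

/-!
If `α (x * x) = α x ^ 2` for a self-adjoint `x`, then `c = x - α x • 1` satisfies
`α (star c * c) = 0`, so by Cauchy–Schwarz `α (d * c) = 0`, i.e. `α (d * x) = α d * α x`, for
every `d`. Multiplicativity follows by splitting `b = ℜ b + I • ℑ b` into self-adjoint parts.
-/

namespace PositiveLinearMap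

section NonUnital

variable {A : Type*} [NonUnitalCStarAlgebra A] [PartialOrder A] [StarOrderedRing A]
  (f : A →ₚ[ℂ] ℂ)

/-- Cauchy–Schwarz `|f (b * c)|² ≤ f (b * star b) f (star c * c)`, read in the GNS space. -/
lemma apply_mul_eq_zero_of_apply_star_mul_self_eq_zero {c : A} (hc : f (star c * c) = 0)
    (b : A) : f (b * c) = 0 := by
  have hc_null : ‖f.toPreGNS c‖ = 0 := by
    have h := f.preGNS_norm_sq (f.toPreGNS c)
    rw [ofPreGNS_toPreGNS, hc] at h
    exact_mod_cast pow_eq_zero_iff two_ne_zero |>.mp h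
  have h := norm_inner_le_norm (𝕜 := ℂ) (f.toPreGNS (star b)) (f.toPreGNS c)
  rw [hc_null, mul_zero, norm_le_zero_iff, preGNS_inner_def] at h
  simpa using h

end NonUnital

variable {A : Type*} [CStarAlgebra A] [PartialOrder A] [StarOrderedRing A] (f : A →ₚ[ℂ] ℂ)

lemma apply_mul_eq_mul_of_apply_mul_self (hf : f 1 = 1) {x : A} (hx_sa : IsSelfAdjoint x)
    (hx : f (x * x) = f x ^ 2) (d : A) : f (d * x) = f d * f x := by
  set c := x - f x • 1 with hc
  have hc_null : f (star c * c) = 0 := by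
    simp only [hc, star_sub, star_smul, hx_sa.star_eq, star_one, sub_mul, mul_sub, smul_mul_assoc,
      mul_smul_comm, one_mul, mul_one, map_sub, map_smul, smul_eq_mul, hf, hx]
    ring
  have h := f.apply_mul_eq_zero_of_apply_star_mul_self_eq_zero hc_null d
  rwa [hc, mul_sub, mul_smul_comm, mul_one, map_sub, map_smul, smul_eq_mul, sub_eq_zero,
    mul_comm] at h

theorem map_mul_iff_apply_mul_self (hf : f 1 = 1) :
    (∀ a b : A, f (a * b) = f a * f b) ↔
      ∀ a : A, IsSelfAdjoint a → f (a * a) = f a ^ 2 := by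
  refine ⟨fun h a _ ↦ by rw [h, sq], fun h a b ↦ ?_⟩
  have hmul (x : selfAdjoint A) : f (a * x) = f a * f x :=
    f.apply_mul_eq_mul_of_apply_mul_self hf x.2 (h x x.2) a
  rw [← realPart_add_I_smul_imaginaryPart b, mul_add, mul_smul_comm, map_add, map_smul,
    map_add, map_smul, hmul, hmul, smul_eq_mul, smul_eq_mul]
  ring

end PositiveLinearMap

noncomputable def IsState'.toPositiveLinearMap {A : Type*} [CStarAlgebra A] [PartialOrder A]
    [StarOrderedRing A] {α : A →ₗ[ℂ] ℂ} (hα : IsState' α) : A →ₚ[ℂ] ℂ :=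
  .mk₀ α fun x hx ↦ by
    obtain ⟨b, rfl⟩ := CStarAlgebra.nonneg_iff_eq_star_mul_self.mp hx
    exact hα.2 b

/-- A state on a unital C*-algebra is multiplicative iff `α (a²) = (α a)²` for
every self-adjoint `a`. -/
theorem state_multiplicative_iff {A : Type*} [CStarAlgebra A]
    (α : A →ₗ[ℂ] ℂ) (hα : IsState' α) :
    (∀ a b : A, α (a * b) = α a * α b) ↔
      (∀ a : A, IsSelfAdjoint a → α (a * a) = α a ^ 2) := by
  let _ := CStarAlgebra.spectralOrder A
  let _ := CStarAlgebra.spectralOrderedRing A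
  exact hα.toPositiveLinearMap.map_mul_iff_apply_mul_self hα.1
end

section
/- Every compact operator on a complex Hilbert space of dimension greater than 1 has a nontrivial closed invariant subspace. -/
/-!
If `T` has an eigenvector `v`, the line `ℂ ∙ v` is invariant, and it is proper because
`dim H > 1`. By the Fredholm alternative, a compact operator with nonzero spectral radius has a
nonzero eigenvalue, and `T = 0` has the eigenvalue `0`.

It remains to treat a nonzero quasinilpotent compact `T` (Hilden's argument). Suppose that for
every `z ≠ 0` the orbit `{S z | S ∈ ℂ[T]}` is dense, and choose a closed ball `B = B(x₀, r)`
with `0 ∉ B` and `0 ∉ K := closure (T B)`. By compactness of `K`, finitely many `S ∈ ℂ[T]`, say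
with `‖S‖ ≤ c`, suffice to move every point of `K` back into `B`. Applying this `n` times starting
from `x₀` gives `Q` commuting with `T` with `‖Q‖ ≤ c ^ n` and `Q (T ^ n x₀) ∈ B`, hence
`‖x₀‖ - r ≤ c ^ n ‖T ^ n‖ ‖x₀‖`. Gelfand's formula makes the right side tend to `0`.
-/

open Filter Topology Metric Module End

lemma tendsto_pow_mul_of_tendsto_rpow_inv_zero {u : ℕ → ℝ} (hu : ∀ n, 0 ≤ u n)
    (h : Tendsto (fun n : ℕ => u n ^ (n⁻¹ : ℝ)) atTop (𝓝 0)) {c : ℝ} (hc : 0 ≤ c) :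
    Tendsto (fun n => c ^ n * u n) atTop (𝓝 0) := by
  have hsmall : ∀ᶠ n : ℕ in atTop, c * u n ^ (n⁻¹ : ℝ) ≤ 1 / 2 :=
    (h.const_mul c).eventually (ge_mem_nhds (by norm_num))
  have hbound : ∀ᶠ n : ℕ in atTop, c ^ n * u n ≤ (1 / 2) ^ n := by
    filter_upwards [hsmall, eventually_ne_atTop 0] with n hn hn0
    calc c ^ n * u n = (c * u n ^ (n⁻¹ : ℝ)) ^ n := by
          rw [mul_pow, Real.rpow_inv_natCast_pow (hu n) hn0]
      _ ≤ (1 / 2) ^ n := pow_le_pow_left₀ (by have := hu n; positivity) hn n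
  exact squeeze_zero' (.of_forall fun n => by have := hu n; positivity) hbound
    (tendsto_pow_atTop_nhds_zero_of_lt_one (by norm_num) (by norm_num))

lemma spectrum.tendsto_pow_mul_norm_pow_of_spectralRadius_eq_zero {A : Type*} [NormedRing A]
    [NormedAlgebra ℂ A] [CompleteSpace A] {a : A} (ha : spectralRadius ℂ a = 0) {c : ℝ}
    (hc : 0 ≤ c) : Tendsto (fun n => c ^ n * ‖a ^ n‖) atTop (𝓝 0) := by
  refine tendsto_pow_mul_of_tendsto_rpow_inv_zero (fun n => norm_nonneg _) ?_ hc
  have hGelfand := spectrum.pow_norm_pow_one_div_tendsto_nhds_spectralRadius a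
  rw [ha] at hGelfand
  simpa [Function.comp_def, Real.rpow_nonneg] using
    (ENNReal.tendsto_toReal ENNReal.zero_ne_top).comp hGelfand

section NormedSpace

variable {𝕜 E F : Type*} [NontriviallyNormedField 𝕜] [NormedAddCommGroup E] [NormedSpace 𝕜 E]
  [NormedAddCommGroup F] [NormedSpace 𝕜 F]

lemma ContinuousLinearMap.exists_zero_notMem_closure_image_closedBall {T : E →L[𝕜] F}
    (hT : T ≠ 0) : ∃ x₀ r, 0 < r ∧ r < ‖x₀‖ ∧ (0 : F) ∉ closure (T '' closedBall x₀ r) := by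
  obtain ⟨x₀, hx₀⟩ : ∃ x₀, T x₀ ≠ 0 := by
    by_contra! h
    exact hT (ContinuousLinearMap.ext h)
  have hTx₀ : 0 < ‖T x₀‖ := norm_pos_iff.2 hx₀
  have hT' : 0 < ‖T‖ := norm_pos_iff.2 hT
  have hr : ‖T‖ * (‖T x₀‖ / (2 * ‖T‖)) = ‖T x₀‖ / 2 := by field_simp
  refine ⟨x₀, ‖T x₀‖ / (2 * ‖T‖), by positivity, ?_, fun h0 => ?_⟩
  · have hx₀' : 0 < ‖x₀‖ := norm_pos_iff.2 fun h => hx₀ (by simp [h])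
    calc ‖T x₀‖ / (2 * ‖T‖) ≤ ‖T‖ * ‖x₀‖ / (2 * ‖T‖) := by gcongr; exact T.le_opNorm x₀
      _ = ‖x₀‖ / 2 := by field_simp
      _ < ‖x₀‖ := half_lt_self hx₀'
  · have hmaps := T.lipschitz.mapsTo_closedBall x₀ (‖T x₀‖ / (2 * ‖T‖))
    have h0mem := closure_minimal hmaps.image_subset isClosed_closedBall h0
    rw [mem_closedBall, dist_zero_left, coe_nnnorm, hr] at h0mem
    linarith

lemma IsCompact.exists_norm_le_of_forall_exists_mem {K : Set E} (hK : IsCompact K) {U : Set F}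
    (hU : IsOpen U) {𝒮 : Set (E →L[𝕜] F)} (h : ∀ z ∈ K, ∃ S ∈ 𝒮, S z ∈ U) :
    ∃ c, 0 ≤ c ∧ ∀ z ∈ K, ∃ S ∈ 𝒮, ‖S‖ ≤ c ∧ S z ∈ U := by
  obtain ⟨t, ht𝒮, ht, hKt⟩ :=
    hK.elim_finite_subcover_image (c := fun S : E →L[𝕜] F => S ⁻¹' U)
      (fun S _ => hU.preimage S.continuous) fun z hz => by simpa using h z hz
  obtain ⟨c, hc⟩ := (ht.image norm).bddAbove
  refine ⟨max c 0, le_max_right _ _, fun z hz => ?_⟩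
  obtain ⟨S, hSt, hSz⟩ := Set.mem_iUnion₂.1 (hKt hz)
  exact ⟨S, ht𝒮 hSt, le_max_of_le_left (hc ⟨S, hSt, rfl⟩), hSz⟩

lemma exists_commute_norm_le_pow_apply_pow_mem {T : E →L[𝕜] E} {B : Set E} {x₀ : E}
    (hx₀ : x₀ ∈ B) {c : ℝ} (h : ∀ b ∈ B, ∃ S, Commute T S ∧ ‖S‖ ≤ c ∧ S (T b) ∈ B) (n : ℕ) :
    ∃ Q, Commute T Q ∧ ‖Q‖ ≤ c ^ n ∧ Q ((T ^ n) x₀) ∈ B := by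
  induction n with
  | zero =>
    exact ⟨1, Commute.one_right T, by rw [pow_zero]; exact ContinuousLinearMap.norm_id_le, hx₀⟩
  | succ n ih =>
    obtain ⟨Q, hQT, hQ, hQB⟩ := ih
    obtain ⟨S, hST, hS, hSB⟩ := h _ hQB
    refine ⟨S * Q, hST.mul_right hQT, ?_, ?_⟩
    · calc ‖S * Q‖ ≤ ‖S‖ * ‖Q‖ := norm_mul_le _ _
        _ ≤ c * c ^ n := mul_le_mul hS hQ (norm_nonneg _) ((norm_nonneg _).trans hS)
        _ = c ^ (n + 1) := (pow_succ' c n).symm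
    · have hQTx : Q (T ((T ^ n) x₀)) = T (Q ((T ^ n) x₀)) :=
        (DFunLike.congr_fun hQT.eq _).symm
      rw [pow_succ']
      show S (Q (T ((T ^ n) x₀))) ∈ B
      rwa [hQTx]

lemma Submodule.span_singleton_ne_top_of_one_lt_rank (hdim : 1 < Module.rank 𝕜 E) (x : E) :
    𝕜 ∙ x ≠ ⊤ := by
  intro htop
  have hrank := rank_span_le (R := 𝕜) ({x} : Set E)
  rw [htop, rank_top, Cardinal.mk_singleton] at hrank
  exact hdim.not_ge hrank

lemma exists_closed_invariant_of_hasEigenvalue [CompleteSpace 𝕜] (hdim : 1 < Module.rank 𝕜 E)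
    {T : E →L[𝕜] E} {μ : 𝕜} (hμ : HasEigenvalue (T : End 𝕜 E) μ) :
    ∃ M : Submodule 𝕜 E, IsClosed (M : Set E) ∧ M ≠ ⊥ ∧ M ≠ ⊤ ∧ ∀ x ∈ M, T x ∈ M := by
  obtain ⟨v, hv⟩ := hμ.exists_hasEigenvector
  refine ⟨𝕜 ∙ v, Submodule.closed_of_finiteDimensional _, by simpa using hv.2,
    Submodule.span_singleton_ne_top_of_one_lt_rank hdim v, fun x hx => ?_⟩
  obtain ⟨a, rfl⟩ := Submodule.mem_span_singleton.1 hx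
  rw [map_smul, show T v = μ • v from mem_eigenspace_iff.1 hv.1, smul_comm]
  exact Submodule.smul_mem _ _ hx

lemma dense_image_apply_adjoin_of_forall_invariant {T : E →L[𝕜] E}
    (h : ∀ M : Submodule 𝕜 E, IsClosed (M : Set E) → (∀ x ∈ M, T x ∈ M) → M ≠ ⊥ → M = ⊤)
    {z : E} (hz : z ≠ 0) :
    Dense ((fun S : E →L[𝕜] E => S z) '' Algebra.adjoin 𝕜 {T}) := by
  set N : Submodule 𝕜 E := (Algebra.adjoin 𝕜 {T}).toSubmodule.map
    (ContinuousLinearMap.apply 𝕜 E z : (E →L[𝕜] E) →ₗ[𝕜] E)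
  have hN : (N : Set E) = (fun S : E →L[𝕜] E => S z) '' Algebra.adjoin 𝕜 {T} :=
    Submodule.map_coe _ _
  rw [← hN, Submodule.dense_iff_topologicalClosure_eq_top]
  refine h _ N.isClosed_topologicalClosure (fun x hx => ?_) ?_
  · refine map_mem_closure T.continuous hx ?_
    rintro _ ⟨S, hS, rfl⟩
    exact ⟨T * S, Subalgebra.mul_mem _ (Algebra.self_mem_adjoin_singleton 𝕜 T) hS, rfl⟩
  · exact (Submodule.ne_bot_iff _).2
      ⟨z, N.le_topologicalClosure ⟨1, Subalgebra.one_mem _, rfl⟩, hz⟩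

end NormedSpace

namespace IsCompactOperator

variable {X : Type*} [NormedAddCommGroup X] [NormedSpace ℂ X] [CompleteSpace X] {T : X →L[ℂ] X}

lemma exists_hasEigenvalue_of_spectralRadius_ne_zero [Nontrivial X] (hT : IsCompactOperator T)
    (hρ : spectralRadius ℂ T ≠ 0) : ∃ μ ≠ 0, HasEigenvalue (T : End ℂ X) μ := by
  obtain ⟨μ, hμ, hμρ⟩ := spectrum.exists_nnnorm_eq_spectralRadius T
  have hμ0 : μ ≠ 0 := by rintro rfl; simp [← hμρ] at hρ
  exact ⟨μ, hμ0, (hT.hasEigenvalue_iff_mem_spectrum hμ0).2 hμ⟩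

theorem exists_not_dense_image_of_spectralRadius_eq_zero (hT : IsCompactOperator T)
    (hT0 : T ≠ 0) (hρ : spectralRadius ℂ T = 0) (𝒮 : Set (X →L[ℂ] X))
    (h𝒮 : ∀ S ∈ 𝒮, Commute T S) : ∃ z ≠ 0, ¬ Dense ((fun S : X →L[ℂ] X => S z) '' 𝒮) := by
  by_contra! hdense
  obtain ⟨x₀, r, hr, hrx₀, h0K⟩ := T.exists_zero_notMem_closure_image_closedBall hT0
  have hK : IsCompact (closure (T '' closedBall x₀ r)) :=
    hT.isCompact_closure_image_of_bounded isBounded_closedBall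
  obtain ⟨c, hc, hcover⟩ := hK.exists_norm_le_of_forall_exists_mem isOpen_ball fun z hz => by
    obtain ⟨_, ⟨S, hS, rfl⟩, hSz⟩ := (hdense z (ne_of_mem_of_not_mem hz h0K)).exists_mem_open
      isOpen_ball ⟨x₀, mem_ball_self hr⟩
    exact ⟨S, hS, hSz⟩
  have hstep : ∀ b ∈ closedBall x₀ r,
      ∃ S, Commute T S ∧ ‖S‖ ≤ c ∧ S (T b) ∈ closedBall x₀ r := by
    intro b hb
    obtain ⟨S, hS, hSc, hSb⟩ := hcover (T b) (subset_closure ⟨b, hb, rfl⟩)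
    exact ⟨S, h𝒮 S hS, hSc, ball_subset_closedBall hSb⟩
  have hlower : ∀ n, ‖x₀‖ - r ≤ c ^ n * ‖T ^ n‖ * ‖x₀‖ := fun n => by
    obtain ⟨Q, -, hQ, hQB⟩ :=
      exists_commute_norm_le_pow_apply_pow_mem (mem_closedBall_self hr.le) hstep n
    rw [mem_closedBall, dist_eq_norm, norm_sub_rev] at hQB
    calc ‖x₀‖ - r ≤ ‖Q ((T ^ n) x₀)‖ := by linarith [norm_sub_norm_le x₀ (Q ((T ^ n) x₀))]
      _ ≤ ‖Q‖ * (‖T ^ n‖ * ‖x₀‖) := (Q.le_opNorm _).trans (by gcongr; exact (T ^ n).le_opNorm x₀)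
      _ ≤ c ^ n * ‖T ^ n‖ * ‖x₀‖ := by rw [← mul_assoc]; gcongr
  have htend := (spectrum.tendsto_pow_mul_norm_pow_of_spectralRadius_eq_zero hρ hc).mul_const ‖x₀‖
  rw [zero_mul] at htend
  linarith [ge_of_tendsto' htend hlower]

end IsCompactOperator

/-- Every compact operator on a complex Hilbert space of dimension greater than
one has a nontrivial closed invariant subspace (Lomonosov). -/
theorem compact_operator_invariant_subspace
    {H : Type*} [NormedAddCommGroup H] [InnerProductSpace ℂ H] [CompleteSpace H]
    (T : H →L[ℂ] H) (hT : IsCompactOperator T)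
    (hdim : 1 < Module.rank ℂ H) :
    ∃ M : Submodule ℂ H, IsClosed (M : Set H) ∧ M ≠ ⊥ ∧ M ≠ ⊤ ∧
      ∀ x ∈ M, T x ∈ M := by
  have : Nontrivial H := rank_pos_iff_nontrivial.1 (zero_lt_one.trans hdim)
  by_contra hnone
  have hnoeig : ∀ μ, ¬ HasEigenvalue (T : End ℂ H) μ := fun μ hμ =>
    hnone (exists_closed_invariant_of_hasEigenvalue hdim hμ)
  have hρ : spectralRadius ℂ T = 0 := by
    by_contra hρ
    obtain ⟨μ, -, hμ⟩ := hT.exists_hasEigenvalue_of_spectralRadius_ne_zero hρ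
    exact hnoeig μ hμ
  have hT0 : T ≠ 0 := by
    rintro rfl
    obtain ⟨x, hx⟩ := exists_ne (0 : H)
    exact hnoeig 0 (hasEigenvalue_of_hasEigenvector (x := x) ⟨by simp, hx⟩)
  obtain ⟨z, hz, hnotdense⟩ := hT.exists_not_dense_image_of_spectralRadius_eq_zero hT0 hρ
    (Algebra.adjoin ℂ {T}) fun S hS => Algebra.commute_of_mem_adjoin_self hS
  refine hnotdense (dense_image_apply_adjoin_of_forall_invariant (fun M hM hMT hM0 => ?_) hz)
  by_contra hMtop
  exact hnone ⟨M, hM, hM0, hMtop, hMT⟩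
end
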